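/- arXiv:1506.07581 — 4 statements merged into one kernel-verified Lean document; each statement's English description precedes it below -/
import Mathlib

section
/- Fix α ∈ (0, 1/2) and R > 1. Then there is a constant C > 0 such that for all T > R, ∫_R^T ∫_R^T ((log x - log y)/(x-y))² · (x^{2α}/y^{2α} + y^{2α}/x^{2α}) dx dy ≤ C · log T. -/
open Real

lemma my_integral_mono {f g : ℝ → ℝ} {a b : ℝ} (hab : a ≤ b)
    (hf0 : ∀ x ∈ Set.Icc a b, 0 ≤ f x) (hfg : ∀ x ∈ Set.Icc a b, f x ≤ g x)
    (hg : IntervalIntegrable g MeasureTheory.volume a b) :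
    (∫ x in a..b, f x) ≤ ∫ x in a..b, g x := by
  by_cases hfi : IntervalIntegrable f MeasureTheory.volume a b
  · exact intervalIntegral.integral_mono_on hab hfi hg hfg
  · rw [intervalIntegral.integral_undef hfi]
    exact intervalIntegral.integral_nonneg hab fun x hx => (hf0 x hx).trans (hfg x hx)

lemma core_bound {α x y : ℝ} (hα1 : 0 < α) (hα2 : α < 1/2) (hy : 0 < y) (hxy : y ≤ x) :
    ((Real.log x - Real.log y) / (x - y))^2 * (x ^ (2*α) / y ^ (2*α) + y ^ (2*α) / x ^ (2*α))
      ≤ (16 + 8/(((1-2*α)/4)^2)) * (x ^ (α - 3/2) * y ^ (-(α + 1/2))) := by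
  have hx : 0 < x := hy.trans_le hxy
  set ε : ℝ := (1-2*α)/4 with hεdef
  clear_value ε
  have hε : 0 < ε := by rw [hεdef]; linarith
  have hK16 : (16:ℝ) ≤ 16 + 8/ε^2 := le_add_of_nonneg_right (by positivity)
  rcases eq_or_lt_of_le hxy with h|h
  · rw [h]; simp; positivity
  · have hsub : 0 < x - y := sub_pos.2 h
    have hL0 : 0 ≤ Real.log x - Real.log y := sub_nonneg.2 (Real.log_le_log hy hxy)
    have hS2 : y ^ (2*α) / x ^ (2*α) ≤ 1 :=
      div_le_one_of_le₀ (Real.rpow_le_rpow hy.le hxy (by positivity)) (by positivity)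
    have hdiv : x ^ (2*α) / y ^ (2*α) = (x/y) ^ (2*α) := (Real.div_rpow hx.le hy.le (2*α)).symm
    have hu1 : 1 ≤ x / y := (one_le_div hy).2 hxy
    have hS0 : 0 ≤ x ^ (2*α) / y ^ (2*α) + y ^ (2*α) / x ^ (2*α) := by positivity
    by_cases hc : x ≤ 2*y
    · -- near-diagonal case
      have h1 : Real.log x - Real.log y ≤ (x - y)/y := by
        have h2 := Real.log_le_sub_one_of_pos (show (0:ℝ) < x/y by positivity)
        rw [Real.log_div hx.ne' hy.ne'] at h2
        calc Real.log x - Real.log y ≤ x/y - 1 := h2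
          _ = (x-y)/y := by field_simp
      have hq : (Real.log x - Real.log y)/(x-y) ≤ 1/y := by
        have := (div_le_div_iff_of_pos_right hsub).2 h1
        calc (Real.log x - Real.log y)/(x-y) ≤ ((x-y)/y)/(x-y) := this
          _ = 1/y := by field_simp
      have hq2 : ((Real.log x - Real.log y)/(x-y))^2 ≤ (1/y)^2 :=
        pow_le_pow_left₀ (div_nonneg hL0 hsub.le) hq 2
      have hS1 : x ^ (2*α) / y ^ (2*α) ≤ 2 := by
        rw [hdiv]
        calc (x/y)^(2*α) ≤ (2:ℝ)^(2*α) :=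
              Real.rpow_le_rpow (by positivity) ((div_le_iff₀ hy).2 (by linarith)) (by positivity)
          _ ≤ (2:ℝ)^(1:ℝ) := Real.rpow_le_rpow_of_exponent_le one_le_two (by linarith)
          _ = 2 := Real.rpow_one 2
      have hLHS : ((Real.log x - Real.log y)/(x-y))^2 *
          (x ^ (2*α) / y ^ (2*α) + y ^ (2*α) / x ^ (2*α)) ≤ (1/y)^2 * 3 :=
        mul_le_mul hq2 (by linarith) hS0 (by positivity)
      -- RHS lower bound
      have hexp : (α - 3/2 : ℝ) ≤ 0 := by linarith
      have h2y : (2*y) ^ (α-3/2) ≤ x ^ (α-3/2) := Real.rpow_le_rpow_of_nonpos hx (by linarith) hexp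
      have hmul : (2*y)^(α-3/2) = 2^(α-3/2) * y^(α-3/2) := Real.mul_rpow (by norm_num) hy.le
      have h4 : (4:ℝ)⁻¹ ≤ (2:ℝ)^(α-3/2) := by
        have h5 : (2:ℝ)^(-2:ℝ) ≤ (2:ℝ)^(α-3/2) :=
          Real.rpow_le_rpow_of_exponent_le one_le_two (by linarith)
        have h6 : (2:ℝ)^(-2:ℝ) = 4⁻¹ := by
          rw [show (-2:ℝ) = ((-2:ℤ):ℝ) by norm_num, Real.rpow_intCast]; norm_num
        linarith
      have hyp0 : 0 ≤ y ^ (α-3/2) := Real.rpow_nonneg hy.le _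
      have hxlow : 4⁻¹ * y ^ (α-3/2) ≤ x ^ (α-3/2) := by
        have := mul_le_mul_of_nonneg_right h4 hyp0
        rw [← hmul] at this
        linarith
      have hyy : y ^ (α-3/2) * y ^ (-(α+1/2)) = (1/y)^2 := by
        rw [← Real.rpow_add hy, show (α-3/2) + (-(α+1/2)) = ((-2:ℤ):ℝ) by push_cast; ring,
          Real.rpow_intCast]
        field_simp
      have hyq0 : 0 ≤ y ^ (-(α+1/2)) := Real.rpow_nonneg hy.le _
      have hRHS : 4 * (1/y)^2 ≤ (16 + 8/ε^2) * (x ^ (α - 3/2) * y ^ (-(α+1/2))) := by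
        have h7 : 4⁻¹ * y ^ (α-3/2) * y ^ (-(α+1/2)) ≤ x ^ (α-3/2) * y ^ (-(α+1/2)) :=
          mul_le_mul_of_nonneg_right hxlow hyq0
        rw [mul_assoc, hyy] at h7
        have h8 : (16:ℝ) * (4⁻¹ * (1/y)^2) ≤ (16 + 8/ε^2) * (x ^ (α-3/2) * y ^ (-(α+1/2))) :=
          mul_le_mul hK16 h7 (by positivity) (by positivity)
        nlinarith [sq_nonneg (1/y)]
      have : (1/y)^2 * 3 ≤ 4 * (1/y)^2 := by have := sq_nonneg (1/y); linarith
      linarith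
    · -- off-diagonal case
      push_neg at hc
      have hxhalf : x/2 ≤ x - y := by linarith
      have hupos : (0:ℝ) < x/y := by positivity
      have hLb : Real.log x - Real.log y ≤ (x/y)^ε / ε := by
        have h1 : Real.log ((x/y)^ε) = ε * (Real.log x - Real.log y) := by
          rw [Real.log_rpow hupos, Real.log_div hx.ne' hy.ne']
        have h2 : Real.log ((x/y)^ε) ≤ (x/y)^ε - 1 :=
          Real.log_le_sub_one_of_pos (Real.rpow_pos_of_pos hupos ε)
        rw [h1] at h2
        rw [le_div_iff₀ hε]
        nlinarith
      have hq : (Real.log x - Real.log y)/(x-y) ≤ ((x/y)^ε/ε) / (x/2) :=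
        div_le_div₀ (by positivity) hLb (by positivity) hxhalf
      have hq2 : ((Real.log x - Real.log y)/(x-y))^2 ≤ (((x/y)^ε/ε) / (x/2))^2 :=
        pow_le_pow_left₀ (div_nonneg hL0 hsub.le) hq 2
      have hsq : (((x/y)^ε/ε) / (x/2))^2 = 4/ε^2 * (x/y)^(2*ε) / x^2 := by
        rw [show (2*ε) = ε * 2 by ring, Real.rpow_mul hupos.le,
          show ((2:ℝ)) = ((2:ℕ):ℝ) by norm_num, Real.rpow_natCast]
        field_simp
        ring
      have hS1 : x ^ (2*α) / y ^ (2*α) + y ^ (2*α) / x ^ (2*α) ≤ 2 * (x/y)^(2*α) := by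
        have h1le : (1:ℝ) ≤ (x/y)^(2*α) := by
          calc (1:ℝ) = (1:ℝ)^(2*α) := (Real.one_rpow _).symm
            _ ≤ (x/y)^(2*α) := Real.rpow_le_rpow zero_le_one hu1 (by positivity)
        rw [hdiv]; linarith
      have hcomb : ((Real.log x - Real.log y)/(x-y))^2 *
          (x ^ (2*α) / y ^ (2*α) + y ^ (2*α) / x ^ (2*α))
            ≤ (4/ε^2 * (x/y)^(2*ε) / x^2) * (2 * (x/y)^(2*α)) := by
        rw [← hsq]
        exact mul_le_mul hq2 hS1 hS0 (by positivity)
      have hmerge : (4/ε^2 * (x/y)^(2*ε) / x^2) * (2 * (x/y)^(2*α))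
          = 8/ε^2 * ((x/y)^(α+1/2) / x^2) := by
        have hAB : (x/y)^(2*ε) * (x/y)^(2*α) = (x/y)^(α+1/2) := by
          rw [← Real.rpow_add hupos, hεdef]; ring_nf
        rw [← hAB]; ring
      have hid : (x/y)^(α+1/2) / x^2 = x ^ (α-3/2) * y ^ (-(α+1/2)) := by
        rw [Real.div_rpow hx.le hy.le, Real.rpow_neg hy.le,
          show (α-3/2:ℝ) = (α+1/2) - 2 by ring, Real.rpow_sub hx,
          show ((2:ℝ)) = ((2:ℕ):ℝ) by norm_num, Real.rpow_natCast]
        ring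
      have hfin : 8/ε^2 * (x ^ (α-3/2) * y ^ (-(α+1/2)))
          ≤ (16 + 8/ε^2) * (x ^ (α-3/2) * y ^ (-(α+1/2))) := by
        apply mul_le_mul_of_nonneg_right (by linarith)
        positivity
      calc ((Real.log x - Real.log y)/(x-y))^2 *
          (x ^ (2*α) / y ^ (2*α) + y ^ (2*α) / x ^ (2*α))
          ≤ (4/ε^2 * (x/y)^(2*ε) / x^2) * (2 * (x/y)^(2*α)) := hcomb
        _ = 8/ε^2 * ((x/y)^(α+1/2) / x^2) := hmerge
        _ = 8/ε^2 * (x ^ (α-3/2) * y ^ (-(α+1/2))) := by rw [hid]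
        _ ≤ _ := hfin

theorem stmt2 (α : ℝ) (hα : α ∈ Set.Ioo (0:ℝ) (1/2)) (R : ℝ) (hR : 1 < R) :
    ∃ C : ℝ, 0 < C ∧ ∀ T : ℝ, R < T →
      (∫ x in R..T, ∫ y in R..T,
        ((Real.log x - Real.log y) / (x - y))^2 *
          (x ^ (2*α) / y ^ (2*α) + y ^ (2*α) / x ^ (2*α)))
        ≤ C * Real.log T := by
  obtain ⟨hα1, hα2⟩ := hα
  have hhalf : (0:ℝ) < 1/2 - α := by linarith
  set K : ℝ := 16 + 8/(((1-2*α)/4)^2) with hKdef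
  have hKpos : 0 < K := by
    have : (0:ℝ) ≤ 8/(((1-2*α)/4)^2) := by positivity
    rw [hKdef]; linarith
  set K2 : ℝ := 2*K/(1/2-α) with hK2def
  have hK2pos : 0 < K2 := by rw [hK2def]; positivity
  refine ⟨K2, hK2pos, fun T hT => ?_⟩
  have hRT : R ≤ T := hT.le
  have hR0 : (0:ℝ) < R := by linarith
  have hT0 : (0:ℝ) < T := by linarith
  set g : ℝ → ℝ → ℝ := fun x y =>
    ((Real.log x - Real.log y) / (x - y))^2 *
      (x ^ (2*α) / y ^ (2*α) + y ^ (2*α) / x ^ (2*α)) with hgdef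
  set h : ℝ → ℝ → ℝ := fun x y =>
    K * ((max x y) ^ (α - 3/2) * (min x y) ^ (-(α + 1/2))) with hhdef
  -- pointwise bound
  have hcore : ∀ x y : ℝ, 0 < x → 0 < y → g x y ≤ h x y := by
    intro x y hx hy
    rcases le_total y x with h'|h'
    · rw [hgdef, hhdef]
      simp only [max_eq_left h', min_eq_right h']
      exact core_bound hα1 hα2 hy h'
    · rw [hgdef, hhdef]
      simp only [max_eq_right h', min_eq_left h']
      have e1 : (Real.log y - Real.log x)/(y-x) = (Real.log x - Real.log y)/(x-y) := by
        rw [show Real.log y - Real.log x = -(Real.log x - Real.log y) by ring,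
          show y - x = -(x-y) by ring, neg_div_neg_eq]
      have := core_bound hα1 hα2 (α := α) hx h'
      rw [e1] at this
      rw [add_comm (x ^ (2*α) / y ^ (2*α))]
      exact this
  -- nonnegativity of g
  have hg0 : ∀ x y : ℝ, 0 < x → 0 < y → 0 ≤ g x y := by
    intro x y hx hy; rw [hgdef]; positivity
  -- continuity of h x
  have hhCont : ∀ x ∈ Set.Icc R T, ContinuousOn (h x) (Set.Icc R T) := by
    intro x hx
    rw [hhdef]
    apply ContinuousOn.mul continuousOn_const
    apply ContinuousOn.mul
    · apply ContinuousOn.rpow_const ((continuous_const.max continuous_id).continuousOn)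
      intro y hy
      exact Or.inl (ne_of_gt (lt_of_lt_of_le hR0 (le_trans hy.1 (le_max_right x y))))
    · apply ContinuousOn.rpow_const ((continuous_const.min continuous_id).continuousOn)
      intro y hy
      exact Or.inl (ne_of_gt (lt_min (lt_of_lt_of_le hR0 hx.1) (lt_of_lt_of_le hR0 hy.1)))
  have hhInt : ∀ x ∈ Set.Icc R T, ∀ a b : ℝ, a ∈ Set.Icc R T → b ∈ Set.Icc R T →
      IntervalIntegrable (h x) MeasureTheory.volume a b := by
    intro x hx a b ha hb
    exact ((hhCont x hx).mono (Set.uIcc_subset_Icc ha hb)).intervalIntegrable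
  -- the key inner bound
  have key : ∀ x ∈ Set.Icc R T, (∫ y in R..T, g x y) ≤ K2 * x⁻¹ := by
    intro x hx
    obtain ⟨hRx, hxT⟩ := hx
    have hx0 : 0 < x := lt_of_lt_of_le hR0 hRx
    have hRmem : R ∈ Set.Icc R T := Set.left_mem_Icc.2 hRT
    have hTmem : T ∈ Set.Icc R T := Set.right_mem_Icc.2 hRT
    have hxmem : x ∈ Set.Icc R T := ⟨hRx, hxT⟩
    have step1 : (∫ y in R..T, g x y) ≤ ∫ y in R..T, h x y := by
      apply my_integral_mono hRT (fun y hy => hg0 x y hx0 (lt_of_lt_of_le hR0 hy.1))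
        (fun y hy => hcore x y hx0 (lt_of_lt_of_le hR0 hy.1))
        (hhInt x hxmem R T hRmem hTmem)
    have hInt1 : IntervalIntegrable (h x) MeasureTheory.volume R x := hhInt x hxmem R x hRmem hxmem
    have hInt2 : IntervalIntegrable (h x) MeasureTheory.volume x T := hhInt x hxmem x T hxmem hTmem
    have hsplit : (∫ y in R..x, h x y) + (∫ y in x..T, h x y) = ∫ y in R..T, h x y :=
      intervalIntegral.integral_add_adjacent_intervals hInt1 hInt2
    -- piece 1
    have p1 : (∫ y in R..x, h x y) ≤ K/(1/2-α) * x⁻¹ := by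
      have e : Set.EqOn (h x) (fun y => (K * x ^ (α-3/2)) * y ^ (-(α+1/2))) (Set.uIcc R x) := by
        intro y hy
        rw [Set.uIcc_of_le hRx] at hy
        rw [hhdef]
        simp only [max_eq_left hy.2, min_eq_right hy.2]
        ring
      rw [intervalIntegral.integral_congr e, intervalIntegral.integral_const_mul,
        integral_rpow (Or.inl (by linarith : (-1:ℝ) < -(α+1/2))),
        show -(α+1/2)+1 = 1/2-α by ring]
      have hb : (x ^ (1/2-α) - R ^ (1/2-α))/(1/2-α) ≤ x ^ (1/2-α)/(1/2-α) := by
        apply div_le_div_of_nonneg_right ?_ hhalf.le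
        exact sub_le_self _ (Real.rpow_nonneg hR0.le _)
      have hxe : x ^ (α-3/2) * x ^ (1/2-α) = x⁻¹ := by
        rw [← Real.rpow_add hx0, show (α-3/2)+(1/2-α) = (-1:ℝ) by ring, Real.rpow_neg_one]
      calc (K * x ^ (α-3/2)) * ((x ^ (1/2-α) - R ^ (1/2-α))/(1/2-α))
          ≤ (K * x ^ (α-3/2)) * (x ^ (1/2-α)/(1/2-α)) := by
            apply mul_le_mul_of_nonneg_left hb
            positivity
        _ = K/(1/2-α) * (x ^ (α-3/2) * x ^ (1/2-α)) := by ring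
        _ = K/(1/2-α) * x⁻¹ := by rw [hxe]
    -- piece 2
    have p2 : (∫ y in x..T, h x y) ≤ K/(1/2-α) * x⁻¹ := by
      have e : Set.EqOn (h x) (fun y => (K * x ^ (-(α+1/2))) * y ^ (α-3/2)) (Set.uIcc x T) := by
        intro y hy
        rw [Set.uIcc_of_le hxT] at hy
        rw [hhdef]
        simp only [max_eq_right hy.1, min_eq_left hy.1]
        ring
      rw [intervalIntegral.integral_congr e, intervalIntegral.integral_const_mul,
        integral_rpow (Or.inr ⟨by intro hcon; linarith [hcon],
          Set.notMem_uIcc_of_lt hx0 hT0⟩),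
        show (α-3/2)+1 = α-1/2 by ring]
      have hb : (T ^ (α-1/2) - x ^ (α-1/2))/(α-1/2) ≤ x ^ (α-1/2)/(1/2-α) := by
        have e2 : (T ^ (α-1/2) - x ^ (α-1/2))/(α-1/2)
            = (x ^ (α-1/2) - T ^ (α-1/2))/(1/2-α) := by
          rw [div_eq_div_iff (by linarith : (α-1/2:ℝ) ≠ 0) (ne_of_gt hhalf)]
          ring
        rw [e2]
        apply div_le_div_of_nonneg_right ?_ hhalf.le
        exact sub_le_self _ (Real.rpow_nonneg hT0.le _)
      have hxe : x ^ (-(α+1/2)) * x ^ (α-1/2) = x⁻¹ := by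
        rw [← Real.rpow_add hx0, show -(α+1/2)+(α-1/2) = (-1:ℝ) by ring, Real.rpow_neg_one]
      calc (K * x ^ (-(α+1/2))) * ((T ^ (α-1/2) - x ^ (α-1/2))/(α-1/2))
          ≤ (K * x ^ (-(α+1/2))) * (x ^ (α-1/2)/(1/2-α)) := by
            apply mul_le_mul_of_nonneg_left hb
            positivity
        _ = K/(1/2-α) * (x ^ (-(α+1/2)) * x ^ (α-1/2)) := by ring
        _ = K/(1/2-α) * x⁻¹ := by rw [hxe]
    calc (∫ y in R..T, g x y) ≤ ∫ y in R..T, h x y := step1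
      _ = (∫ y in R..x, h x y) + (∫ y in x..T, h x y) := hsplit.symm
      _ ≤ K/(1/2-α) * x⁻¹ + K/(1/2-α) * x⁻¹ := add_le_add p1 p2
      _ = K2 * x⁻¹ := by rw [hK2def]; ring
  -- outer integral
  have outer : (∫ x in R..T, ∫ y in R..T, g x y) ≤ ∫ x in R..T, K2 * x⁻¹ := by
    apply my_integral_mono hRT
      (fun x hx => intervalIntegral.integral_nonneg hRT
        (fun y hy => hg0 x y (lt_of_lt_of_le hR0 hx.1) (lt_of_lt_of_le hR0 hy.1)))
      key
    apply ContinuousOn.intervalIntegrable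
    apply ContinuousOn.mul continuousOn_const
    apply ContinuousOn.inv₀ continuousOn_id
    intro x hx
    rw [Set.uIcc_of_le hRT] at hx
    exact ne_of_gt (lt_of_lt_of_le hR0 hx.1)
  have hval : (∫ x in R..T, K2 * x⁻¹) = K2 * (Real.log T - Real.log R) := by
    rw [intervalIntegral.integral_const_mul, integral_inv_of_pos hR0 hT0,
      Real.log_div (ne_of_gt hT0) (ne_of_gt hR0)]
  have hlogR : 0 ≤ Real.log R := Real.log_nonneg hR.le
  calc (∫ x in R..T, ∫ y in R..T, g x y) ≤ ∫ x in R..T, K2 * x⁻¹ := outer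
    _ = K2 * (Real.log T - Real.log R) := hval
    _ ≤ K2 * Real.log T := by nlinarith
end

section
/- For α ∈ (0, 1/2), the double integral ∫_0^1 ∫_1^∞ (y^{2α}/x^{2α} + 1) · ((log x)/(x-y))² dy dx is finite. -/
open MeasureTheory Set Real

/-- basic log bound: for 0 < x, -log x ≤ x^(-δ)/δ -/
lemma neg_log_le_rpow {x δ : ℝ} (hx : 0 < x) (hδ : 0 < δ) :
    -Real.log x ≤ x ^ (-δ) / δ := by
  have h := Real.log_le_sub_one_of_pos (Real.rpow_pos_of_pos hx (-δ))
  rw [Real.log_rpow hx] at h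
  rw [le_div_iff₀ hδ]
  nlinarith

set_option maxHeartbeats 1600000 in
/-- core polynomial inequality -/
lemma core_ineq {δ x y a b c L : ℝ} (hδ : 0 < δ) (hδ1 : δ ≤ 1) (hx0 : 0 < x) (hx1 : x < 1)
    (hy : 1 < y) (ha : 0 < a) (ha1 : a ≤ 1) (hb1 : 1 ≤ b) (hby : b ≤ y) (hc1 : 1 ≤ c)
    (hL2c : δ^2 * L^2 ≤ c^2) (hLneg : 0 ≤ -L) (hLx : -L ≤ (1-x)/x) :
    (b + a) * L^2 * y^2 * δ^2 ≤ 64 * c^2 * b * (y-x)^2 := by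
  have hb0 : (0:ℝ) < b := by linarith
  have hc0 : (0:ℝ) < c := by linarith
  have hba : b + a ≤ 2 * b := by linarith
  have hba0 : (0:ℝ) < b + a := by linarith
  have hd0 : 0 < y - x := by linarith
  have hδsq : δ^2 ≤ 1 := by nlinarith
  have hcsq : 1 ≤ c^2 := by nlinarith
  have hLsq : 0 ≤ L^2 := sq_nonneg L
  have hdsq0 : 0 ≤ (y-x)^2 := sq_nonneg _
  have hX : 0 ≤ c^2 * b * (y-x)^2 :=
    mul_nonneg (mul_nonneg (sq_nonneg c) hb0.le) hdsq0
  rcases le_or_gt y 2 with hy2 | hy2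
  · -- 1 < y ≤ 2
    have hb2 : b ≤ 2 := le_trans hby hy2
    have hy2sq : y^2 ≤ 4 := by nlinarith
    have step1 : (b+a) * y^2 ≤ (2*b) * 4 := by
      have h1 : (b+a) * y^2 ≤ (2*b) * y^2 :=
        mul_le_mul_of_nonneg_right hba (sq_nonneg y)
      have h2 : (2*b) * y^2 ≤ (2*b) * 4 :=
        mul_le_mul_of_nonneg_left hy2sq (by linarith)
      linarith
    rcases le_or_gt x (1/2) with hxh | hxh
    · -- x ≤ 1/2
      have hdsq : (1:ℝ)/4 ≤ (y-x)^2 := by nlinarith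
      calc (b + a) * L^2 * y^2 * δ^2 = ((b+a) * y^2) * (δ^2 * L^2) := by ring
        _ ≤ ((2*b) * 4) * (δ^2 * L^2) := by
            apply mul_le_mul_of_nonneg_right step1 (by positivity)
        _ ≤ ((2*b) * 4) * c^2 := by
            apply mul_le_mul_of_nonneg_left hL2c (by linarith)
        _ = (64 * c^2 * b) * (1/8) := by ring
        _ ≤ (64 * c^2 * b) * (y-x)^2 := by
            apply mul_le_mul_of_nonneg_left _ (by positivity)
            linarith
        _ = 64 * c^2 * b * (y-x)^2 := by ring
    · -- 1/2 < x < 1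
      have h1 : -L ≤ 2*(1-x) := by
        calc -L ≤ (1-x)/x := hLx
          _ ≤ 2*(1-x) := by rw [div_le_iff₀ hx0]; nlinarith
      have hL4 : L^2 ≤ 4*(y-x)^2 := by nlinarith
      calc (b + a) * L^2 * y^2 * δ^2 ≤ ((b+a) * y^2) * L^2 * 1 := by
            have e : (b + a) * L^2 * y^2 * δ^2 = ((b+a) * y^2) * L^2 * δ^2 := by ring
            rw [e]
            apply mul_le_mul_of_nonneg_left hδsq
            exact mul_nonneg (mul_nonneg hba0.le (sq_nonneg y)) hLsq
        _ = ((b+a) * y^2) * L^2 := by ring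
        _ ≤ ((2*b) * 4) * L^2 := mul_le_mul_of_nonneg_right step1 hLsq
        _ ≤ ((2*b) * 4) * (4*(y-x)^2) := by
            apply mul_le_mul_of_nonneg_left hL4 (by linarith)
        _ = (32 * (b * (y-x)^2)) * 1 := by ring
        _ ≤ (32 * (b * (y-x)^2)) * c^2 := by
            apply mul_le_mul_of_nonneg_left hcsq
            have : 0 ≤ b * (y-x)^2 := mul_nonneg hb0.le hdsq0
            linarith
        _ ≤ 64 * c^2 * b * (y-x)^2 := by nlinarith [hX]
  · -- y > 2
    have hdy : y/2 ≤ y - x := by linarith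
    have hdsq : y^2/4 ≤ (y-x)^2 := by nlinarith
    calc (b + a) * L^2 * y^2 * δ^2 = ((b+a) * y^2) * (δ^2 * L^2) := by ring
      _ ≤ ((2*b) * y^2) * (δ^2 * L^2) := by
          apply mul_le_mul_of_nonneg_right
            (mul_le_mul_of_nonneg_right hba (sq_nonneg y)) (by positivity)
      _ ≤ ((2*b) * y^2) * c^2 := by
          apply mul_le_mul_of_nonneg_left hL2c
          have : 0 ≤ (2*b) * y^2 := mul_nonneg (by linarith) (sq_nonneg y)
          linarith
      _ = (8 * c^2 * b) * (y^2/4) := by ring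
      _ ≤ (8 * c^2 * b) * (y-x)^2 := by
          apply mul_le_mul_of_nonneg_left hdsq
          have : 0 ≤ 8 * c^2 * b := by positivity
          linarith
      _ ≤ 64 * c^2 * b * (y-x)^2 := by nlinarith [hX]

/-- key pointwise bound -/
lemma key_bound (α : ℝ) (hα0 : 0 < α) (hα1 : α < 1/2) {x y : ℝ}
    (hx0 : 0 < x) (hx1 : x < 1) (hy : 1 < y) :
    (y ^ (2*α) / x ^ (2*α) + 1) * ((Real.log x) / (x - y))^2 ≤
      (64/((1-2*α)/4)^2) * (x ^ (-(α+1/2)) * y ^ (2*α-2)) := by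
  have hδ : 0 < (1-2*α)/4 := by linarith
  have hδ1 : (1-2*α)/4 ≤ 1 := by linarith
  have hy0 : 0 < y := by linarith
  have ha : 0 < x ^ (2*α) := Real.rpow_pos_of_pos hx0 _
  have hb : 0 < y ^ (2*α) := Real.rpow_pos_of_pos hy0 _
  have hc : 0 < x ^ (-((1-2*α)/4)) := Real.rpow_pos_of_pos hx0 _
  have ha1 : x ^ (2*α) ≤ 1 := Real.rpow_le_one hx0.le hx1.le (by linarith)
  have hb1 : 1 ≤ y ^ (2*α) := Real.one_le_rpow hy.le (by linarith)
  have hby : y ^ (2*α) ≤ y := by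
    calc y ^ (2*α) ≤ y ^ (1:ℝ) :=
          Real.rpow_le_rpow_of_exponent_le hy.le (by linarith)
      _ = y := Real.rpow_one y
  have hc1 : 1 ≤ x ^ (-((1-2*α)/4)) := by
    calc (1:ℝ) = x ^ (0:ℝ) := (Real.rpow_zero x).symm
      _ ≤ x ^ (-((1-2*α)/4)) :=
          Real.rpow_le_rpow_of_exponent_ge hx0 hx1.le (by linarith)
  have hLneg : 0 ≤ -Real.log x := neg_nonneg.mpr (Real.log_nonpos hx0.le hx1.le)
  have hL2c : ((1-2*α)/4)^2 * (Real.log x)^2 ≤ (x ^ (-((1-2*α)/4)))^2 := by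
    have h1 : -Real.log x * ((1-2*α)/4) ≤ x ^ (-((1-2*α)/4)) := by
      have := neg_log_le_rpow hx0 hδ
      rw [le_div_iff₀ hδ] at this
      exact this
    have h0 : 0 ≤ -Real.log x * ((1-2*α)/4) := mul_nonneg hLneg hδ.le
    have h2 := pow_le_pow_left₀ h0 h1 2
    calc ((1-2*α)/4)^2 * (Real.log x)^2 = (-Real.log x * ((1-2*α)/4))^2 := by ring
      _ ≤ (x ^ (-((1-2*α)/4)))^2 := h2
  have hLx : -Real.log x ≤ (1-x)/x := by
    have h := Real.log_le_sub_one_of_pos (show (0:ℝ) < 1/x by positivity)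
    rw [one_div, Real.log_inv] at h
    have hx' : (1-x)/x = x⁻¹ - 1 := by field_simp
    rw [hx']
    linarith
  have hcore := core_ineq hδ hδ1 hx0 hx1 hy ha ha1 hb1 hby hc1 hL2c hLneg hLx
  -- rpow identities
  have hxexp : x ^ (-(α+1/2)) = (x ^ (-((1-2*α)/4)))^2 / x ^ (2*α) := by
    rw [sq, ← Real.rpow_add hx0, ← Real.rpow_sub hx0]
    congr 1
    ring
  have hyexp : y ^ (2*α-2) = y ^ (2*α) / y^2 := by
    rw [← Real.rpow_natCast y 2, ← Real.rpow_sub hy0]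
    norm_num
  -- rewrite goal as fractions
  have hEq1 : (y ^ (2*α) / x ^ (2*α) + 1) * ((Real.log x) / (x - y))^2
      = ((y ^ (2*α) + x ^ (2*α)) * (Real.log x)^2) / (x ^ (2*α) * (y-x)^2) := by
    rw [show ((Real.log x) / (x - y))^2 = (Real.log x)^2/(y-x)^2 by
          rw [div_pow]; congr 1; ring,
      div_add' _ _ _ ha.ne', div_mul_div_comm, one_mul]
  have hEq2 : (64/((1-2*α)/4)^2) * (x ^ (-(α+1/2)) * y ^ (2*α-2))
      = (64 * (x ^ (-((1-2*α)/4)))^2 * y ^ (2*α)) / (((1-2*α)/4)^2 * (x ^ (2*α) * y^2)) := by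
    rw [hxexp, hyexp]
    rw [div_mul_div_comm, div_mul_div_comm]
    ring
  have hyx : (0:ℝ) < y - x := by linarith
  rw [hEq1, hEq2]
  rw [div_le_div_iff₀ (mul_pos ha (pow_pos hyx 2))
    (mul_pos (pow_pos hδ 2) (mul_pos ha (pow_pos hy0 2)))]
  calc (y ^ (2*α) + x ^ (2*α)) * Real.log x ^ 2 * (((1-2*α)/4)^2 * (x ^ (2*α) * y^2))
      = ((y ^ (2*α) + x ^ (2*α)) * Real.log x ^ 2 * y^2 * ((1-2*α)/4)^2) * x ^ (2*α) := by ring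
    _ ≤ (64 * (x ^ (-((1-2*α)/4)))^2 * y ^ (2*α) * (y-x)^2) * x ^ (2*α) :=
        mul_le_mul_of_nonneg_right hcore ha.le
    _ = 64 * (x ^ (-((1-2*α)/4)))^2 * y ^ (2*α) * (x ^ (2*α) * (y-x)^2) := by ring

theorem stmt4 (α : ℝ) (hα : α ∈ Set.Ioo (0:ℝ) (1/2)) :
    MeasureTheory.IntegrableOn
      (fun p : ℝ × ℝ => (p.2 ^ (2*α) / p.1 ^ (2*α) + 1) * ((Real.log p.1) / (p.1 - p.2))^2)
      (Set.Ioo (0:ℝ) 1 ×ˢ Set.Ioi (1:ℝ)) := by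
  obtain ⟨hα0, hα1⟩ := hα
  -- integrability of the dominating function
  have hF : IntegrableOn (fun x : ℝ => x ^ (-(α+1/2))) (Set.Ioo (0:ℝ) 1) := by
    rw [intervalIntegral.integrableOn_Ioo_rpow_iff one_pos]
    linarith
  have hG : IntegrableOn (fun y : ℝ => y ^ (2*α-2)) (Set.Ioi (1:ℝ)) :=
    integrableOn_Ioi_rpow_of_lt (by linarith) one_pos
  have hg : IntegrableOn
      (fun p : ℝ × ℝ => (64/((1-2*α)/4)^2) * (p.1 ^ (-(α+1/2)) * p.2 ^ (2*α-2)))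
      (Set.Ioo (0:ℝ) 1 ×ˢ Set.Ioi (1:ℝ)) := by
    apply Integrable.const_mul
    have h := MeasureTheory.Integrable.mul_prod (L := ℝ) hF hG
    have hmeq : (volume : Measure (ℝ × ℝ)).restrict (Set.Ioo (0:ℝ) 1 ×ˢ Set.Ioi (1:ℝ))
        = (volume.restrict (Set.Ioo (0:ℝ) 1)).prod (volume.restrict (Set.Ioi (1:ℝ))) := by
      rw [Measure.volume_eq_prod, Measure.prod_restrict]
    show Integrable _ ((volume : Measure (ℝ × ℝ)).restrict _)
    rw [hmeq]
    exact h
  apply hg.mono'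
  · -- measurability via continuity on the set
    apply ContinuousOn.aestronglyMeasurable _ (measurableSet_Ioo.prod measurableSet_Ioi)
    have hfst : ContinuousOn (fun p : ℝ × ℝ => p.1) (Set.Ioo (0:ℝ) 1 ×ˢ Set.Ioi (1:ℝ)) :=
      continuous_fst.continuousOn
    have hsnd : ContinuousOn (fun p : ℝ × ℝ => p.2) (Set.Ioo (0:ℝ) 1 ×ˢ Set.Ioi (1:ℝ)) :=
      continuous_snd.continuousOn
    apply ContinuousOn.mul
    · apply ContinuousOn.add _ continuousOn_const
      apply ContinuousOn.div
      · exact hsnd.rpow_const (fun p _ => Or.inr (by linarith))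
      · exact hfst.rpow_const (fun p _ => Or.inr (by linarith))
      · intro p hp
        exact (Real.rpow_pos_of_pos hp.1.1 _).ne'
    · apply ContinuousOn.pow
      apply ContinuousOn.div
      · exact hfst.log (fun p hp => hp.1.1.ne')
      · exact hfst.sub hsnd
      · intro p hp
        have h1 : p.1 < 1 := hp.1.2
        have h2 : 1 < p.2 := hp.2
        intro hc
        have : p.1 = p.2 := by linarith [sub_eq_zero.mp hc]
        linarith
  · -- a.e. bound
    rw [MeasureTheory.ae_restrict_iff' ((measurableSet_Ioo).prod measurableSet_Ioi)]
    filter_upwards with p hp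
    simp only [Set.mem_prod, Set.mem_Ioo, Set.mem_Ioi] at hp
    obtain ⟨⟨hx0, hx1⟩, hy⟩ := hp
    have hb := key_bound α hα0 hα1 hx0 hx1 hy
    rw [Real.norm_eq_abs, abs_of_nonneg]
    · exact hb
    · have h1 : (0:ℝ) ≤ p.2 ^ (2*α) / p.1 ^ (2*α) :=
        div_nonneg (Real.rpow_nonneg (by linarith) _) (Real.rpow_nonneg hx0.le _)
      positivity
end

section
/- Suppose A, B : ℝ → ℝ satisfy |A(x)| ≤ C|x|^{-1/2+ε} and |B(x)| ≤ C|x|^{-1/2+ε} for 0 < |x| < R, and |A(x)| ≤ C|x|^{1/2-ε}, |B(x)| ≤ C|x|^{1/2-ε} for |x| ≥ R, with 0 < ε < 1/2. Then there exists C' > 0 such that for all y with |y| ≥ 2R, ∫_{|x|<R} |Π(x,y)|² dx ≤ C'/(1 + |y|^{1+2ε}), where Π(x,y) = (A(x)B(y) - B(x)A(y))/(x-y). -/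
open MeasureTheory Real

theorem stmt8 (A B : ℝ → ℝ) (C R ε : ℝ) (hC : 0 < C) (hR : 0 < R)
    (hε : 0 < ε) (hε' : ε < 1/2)
    (hAin : ∀ x : ℝ, 0 < |x| → |x| < R → |A x| ≤ C * |x| ^ (-(1/2) + ε))
    (hBin : ∀ x : ℝ, 0 < |x| → |x| < R → |B x| ≤ C * |x| ^ (-(1/2) + ε))
    (hAout : ∀ x : ℝ, R ≤ |x| → |A x| ≤ C * |x| ^ (1/2 - ε))
    (hBout : ∀ x : ℝ, R ≤ |x| → |B x| ≤ C * |x| ^ (1/2 - ε)) :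
    ∃ C' : ℝ, 0 < C' ∧ ∀ y : ℝ, 2 * R ≤ |y| →
      (∫ x in Set.Ioo (-R) R, ((A x * B y - B x * A y) / (x - y))^2)
        ≤ C' / (1 + |y| ^ (1 + 2*ε)) := by
  set p : ℝ := 2*ε - 1 with hp
  set q : ℝ := -(1 + 2*ε) with hq
  have hp1 : (-1:ℝ) < p := by simp [hp]; linarith
  -- integrability of |x|^p on Ioo (-R) R
  have h1 : IntervalIntegrable (fun x : ℝ => x ^ p) volume 0 R :=
    intervalIntegral.intervalIntegrable_rpow' hp1
  have h2 : IntegrableOn (fun x : ℝ => |x| ^ p) (Set.Ioc 0 R) := by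
    refine (h1.1.congr_fun (fun x hx => ?_) measurableSet_Ioc)
    rw [abs_of_pos hx.1]
  have h3 : IntegrableOn (fun x : ℝ => |x| ^ p) (Set.Ioc (-R) 0) := by
    have := (IntervalIntegrable.iff_comp_neg (f := fun x : ℝ => |x| ^ p)
      (a := 0) (b := -R)).mpr ?_
    · simpa using this.symm.1
    · simpa using ((intervalIntegrable_iff_integrableOn_Ioc_of_le hR.le).mpr h2)
  have hφ : IntegrableOn (fun x : ℝ => |x| ^ p) (Set.Ioo (-R) R) := by
    have : IntegrableOn (fun x : ℝ => |x| ^ p) (Set.Ioc (-R) 0 ∪ Set.Ioc 0 R) := h3.union h2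
    refine this.mono_set fun x hx => ?_
    rcases le_or_gt x 0 with h | h
    · exact Or.inl ⟨hx.1, h⟩
    · exact Or.inr ⟨h, hx.2.le⟩
  set I : ℝ := ∫ x in Set.Ioo (-R) R, |x| ^ p with hI
  have hI0 : 0 ≤ I := integral_nonneg fun x => rpow_nonneg (abs_nonneg x) p
  refine ⟨16 * C^4 * (I + 1) * ((2*R) ^ q + 1), by positivity, fun y hy => ?_⟩
  have hb0 : (0:ℝ) < |y| := lt_of_lt_of_le (by linarith) hy
  have hyR : R ≤ |y| := le_trans (by linarith) hy
  have hAy := hAout y hyR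
  have hBy := hBout y hyR
  -- pointwise bound
  have hpt : ∀ x ∈ Set.Ioo (-R) R, x ≠ 0 →
      ((A x * B y - B x * A y) / (x - y))^2 ≤ 16 * C^4 * |y| ^ q * |x| ^ p := by
    intro x hx hx0
    have hax0 : 0 < |x| := abs_pos.mpr hx0
    have haxR : |x| < R := abs_lt.mpr ⟨hx.1, hx.2⟩
    have hAx := hAin x hax0 haxR
    have hBx := hBin x hax0 haxR
    set e1 : ℝ := -(1/2) + ε with he1
    set e2 : ℝ := 1/2 - ε with he2
    have hra : (0:ℝ) ≤ |x| ^ e1 := rpow_nonneg (abs_nonneg x) e1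
    have hrb : (0:ℝ) ≤ |y| ^ e2 := rpow_nonneg (abs_nonneg y) e2
    have hnum : |A x * B y - B x * A y| ≤ 2 * C^2 * |x| ^ e1 * |y| ^ e2 := by
      calc |A x * B y - B x * A y| ≤ |A x * B y| + |B x * A y| := abs_sub _ _
        _ = |A x| * |B y| + |B x| * |A y| := by rw [abs_mul, abs_mul]
        _ ≤ (C * |x| ^ e1) * (C * |y| ^ e2) + (C * |x| ^ e1) * (C * |y| ^ e2) := by
            gcongr <;> positivity
        _ = 2 * C^2 * |x| ^ e1 * |y| ^ e2 := by ring
    have hden : |y| / 2 ≤ |x - y| := by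
      have h1 : |y| - |x| ≤ |x - y| := by
        have := abs_sub_abs_le_abs_sub y x
        rwa [abs_sub_comm] at this
      have : |x| ≤ R := haxR.le
      linarith
    have hsq : ((A x * B y - B x * A y) / (x - y))^2
        ≤ (2 * C^2 * |x| ^ e1 * |y| ^ e2)^2 / (|y|/2)^2 := by
      rw [div_pow]
      apply div_le_div₀ (by positivity)
      · rw [← sq_abs]
        exact pow_le_pow_left₀ (abs_nonneg _) hnum 2
      · positivity
      · rw [← sq_abs (x - y)]
        exact pow_le_pow_left₀ (by positivity) hden 2
    refine hsq.trans_eq ?_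
    have ha2 : (|x| ^ e1)^2 = |x| ^ p := by
      rw [← rpow_natCast (|x| ^ e1) 2, ← rpow_mul (abs_nonneg x)]
      norm_num [he1, hp]; ring_nf
    have hb2 : (|y| ^ e2)^2 = |y| ^ (1 - 2*ε) := by
      rw [← rpow_natCast (|y| ^ e2) 2, ← rpow_mul (abs_nonneg y)]
      norm_num [he2]; ring_nf
    have hb3 : |y| ^ (1 - 2*ε) = |y| ^ q * |y|^2 := by
      rw [← rpow_natCast (|y|) 2, ← rpow_add hb0]
      norm_num [hq]; ring_nf
    have hy0 : y ≠ 0 := abs_pos.mp hb0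
    rw [mul_pow, mul_pow, ha2, hb2, hb3, div_pow]
    have hy2 : (|y|:ℝ)^2 = y^2 := sq_abs y
    rw [hy2]
    have hyy : y^2 ≠ 0 := pow_ne_zero 2 hy0
    field_simp
    ring
  -- integral bound
  have hint : (∫ x in Set.Ioo (-R) R, ((A x * B y - B x * A y) / (x - y))^2)
      ≤ 16 * C^4 * |y| ^ q * I := by
    have hg : Integrable (fun x : ℝ => 16 * C^4 * |y| ^ q * |x| ^ p)
        (volume.restrict (Set.Ioo (-R) R)) := hφ.const_mul _
    have h0 : ∀ᵐ x : ℝ, x ≠ (0:ℝ) := by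
      refine ae_iff.mpr ?_
      simpa using measure_singleton (0:ℝ)
    have hle : (fun x : ℝ => ((A x * B y - B x * A y) / (x - y))^2)
        ≤ᵐ[volume.restrict (Set.Ioo (-R) R)]
        fun x => 16 * C^4 * |y| ^ q * |x| ^ p := by
      filter_upwards [ae_restrict_of_ae h0, ae_restrict_mem measurableSet_Ioo]
        with x hx0 hxmem
      exact hpt x hxmem hx0
    have := integral_mono_of_nonneg (Filter.Eventually.of_forall fun x => sq_nonneg _) hg hle
    rwa [integral_const_mul] at this
  refine hint.trans ?_
  have hs0 : (0:ℝ) < 1 + |y| ^ (1 + 2*ε) := by positivity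
  rw [le_div_iff₀ hs0]
  have hbq : |y| ^ q ≤ (2*R) ^ q :=
    rpow_le_rpow_of_nonpos (by linarith) hy (by simp [hq]; linarith)
  have hbq0 : (0:ℝ) < |y| ^ q := rpow_pos_of_pos hb0 q
  have hmul : |y| ^ q * |y| ^ (1 + 2*ε) = 1 := by
    rw [← rpow_add hb0, show q + (1 + 2*ε) = 0 from by rw [hq]; ring, rpow_zero]
  have hC4 : (0:ℝ) < C^4 := by positivity
  have h4 : I * |y| ^ q ≤ (I + 1) * (2*R) ^ q :=
    mul_le_mul (by linarith) hbq hbq0.le (by linarith)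
  calc 16 * C^4 * |y| ^ q * I * (1 + |y| ^ (1 + 2*ε))
      = 16 * C^4 * (I * |y| ^ q + I * (|y| ^ q * |y| ^ (1 + 2*ε))) := by ring
    _ = 16 * C^4 * (I * |y| ^ q + I) := by rw [hmul, mul_one]
    _ ≤ 16 * C^4 * ((I + 1) * (2*R) ^ q + (I + 1)) := by
        apply mul_le_mul_of_nonneg_left _ (by positivity)
        linarith
    _ = 16 * C^4 * (I + 1) * ((2*R) ^ q + 1) := by ring
end

section
/- Fix α ∈ (0, 1/2) and let Π : ℤ × ℤ → ℝ be a kernel satisfying |Π(x,y)| ≤ C · ((|x|/|y|)^α + (|y|/|x|)^α)/|x-y| for all |x|, |y| ≥ R with x ≠ y. Then there is a constant C' such that for all T > R, Σ_{R ≤ |x| ≤ T} Σ_{R ≤ |y| ≤ T, y ≠ x} ((log|x| - log|y|)/log T)² |Π(x,y)|² ≤ C'/log T. -/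
/-!
Put `u = |x|`, `v = |y|`, `M = max u v`, `m = min u v` and `γ = 2α + 2ε < 1` for a small `ε > 0`.
Since `|x - y| ≥ M - m`, every `(log u - log v)² K(x, y)²` is at most `16 C² ε⁻² (M / m)^γ / M²`:
near the diagonal (`M ≤ 2m`) because `log (M / m) ≤ (M - m) / m`, away from it because
`log r ≤ r^ε / ε` and `|x - y| ≥ M / 2`. Summed over `v` this weight is `O(1 / u)`: for `v ≤ u` it
is a `p`-series with exponent `γ < 1`, for `v > u` the tail of one with exponent `2 - γ > 1`.
Summing `1 / |x|` over `|x| ≤ T` costs `1 + log T`, and dividing by `(log T)²` leaves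
`O(1 / log T)`.
-/

open Real Finset

theorem Finset.sum_Ioc_le_sub_of_le_sub {f F : ℕ → ℝ} {a b : ℕ} (hab : a ≤ b)
    (h : ∀ n, a ≤ n → n < b → f (n + 1) ≤ F (n + 1) - F n) :
    ∑ n ∈ Ioc a b, f n ≤ F b - F a := by
  induction b, hab using Nat.le_induction with
  | base => simp
  | succ b hab ih =>
    rw [sum_Ioc_succ_top hab]
    linarith [ih fun n hn hnb => h n hn (by omega), h b hab (by omega)]

namespace Real

theorem mul_rpow_neg_le_rpow_sub_rpow {x c : ℝ} (hx : 0 ≤ x) (hc0 : 0 ≤ c) (hc1 : c ≤ 1) :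
    (1 - c) * (x + 1) ^ (-c) ≤ (x + 1) ^ (1 - c) - x ^ (1 - c) := by
  have hx1 : 0 < x + 1 := by linarith
  have hs : -1 ≤ -(x + 1)⁻¹ := by
    rw [neg_le_neg_iff]; exact inv_le_one_of_one_le₀ (by linarith)
  have hsplit : (x + 1) ^ (1 - c) = (x + 1) * (x + 1) ^ (-c) := by
    rw [sub_eq_add_neg, rpow_add hx1, rpow_one]
  suffices x ^ (1 - c) ≤ (x + 1) ^ (1 - c) - (1 - c) * (x + 1) ^ (-c) by linarith
  calc x ^ (1 - c) = (x + 1) ^ (1 - c) * (1 + -(x + 1)⁻¹) ^ (1 - c) := by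
        rw [← mul_rpow hx1.le (by linarith)]; congr 1; field_simp; ring
    _ ≤ (x + 1) ^ (1 - c) * (1 + (1 - c) * -(x + 1)⁻¹) := by
        gcongr; exact rpow_one_add_le_one_add_mul_self hs (by linarith) (by linarith)
    _ = (x + 1) ^ (1 - c) - (1 - c) * (x + 1) ^ (-c) := by
        rw [hsplit]; field_simp; ring

theorem mul_rpow_neg_one_sub_le_rpow_neg_sub_rpow_neg {x s : ℝ} (hx : 0 < x) (hs : 0 < s) :
    s * (x + 1) ^ (-1 - s) ≤ x ^ (-s) - (x + 1) ^ (-s) := by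
  have hx1 : 0 < x + 1 := by linarith
  have hratio : 1 + s * (x + 1)⁻¹ ≤ ((x + 1) / x) ^ s := by
    rw [rpow_def_of_pos (by positivity)]
    refine le_trans ?_ (add_one_le_exp _)
    have := one_sub_inv_le_log_of_pos (div_pos hx1 hx)
    rw [inv_div, one_sub_div hx1.ne', add_sub_cancel_left, one_div] at this
    nlinarith [mul_le_mul_of_nonneg_left this hs.le]
  have hsplit : x ^ (-s) = (x + 1) ^ (-s) * ((x + 1) / x) ^ s := by
    rw [div_rpow hx1.le hx.le, rpow_neg hx1.le, rpow_neg hx.le]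
    field_simp
  have hpow : (x + 1) ^ (-1 - s) = (x + 1) ^ (-s) * (x + 1)⁻¹ := by
    rw [sub_eq_neg_add, neg_add_eq_sub, sub_eq_add_neg, rpow_add hx1, rpow_neg_one]
    ring
  rw [hsplit, hpow]
  nlinarith [rpow_pos_of_pos hx1 (-s)]

theorem sum_Ioc_rpow_neg_le {c : ℝ} (hc0 : 0 ≤ c) (hc1 : c < 1) (N : ℕ) :
    ∑ n ∈ Ioc 0 N, (n : ℝ) ^ (-c) ≤ (N : ℝ) ^ (1 - c) / (1 - c) := by
  have h1c : 0 < 1 - c := by linarith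
  have := sum_Ioc_le_sub_of_le_sub (f := fun n : ℕ => (n : ℝ) ^ (-c))
    (F := fun n : ℕ => (n : ℝ) ^ (1 - c) / (1 - c)) (Nat.zero_le N) fun n _ _ => by
      rw [div_sub_div_same, le_div_iff₀ h1c, mul_comm]
      push_cast
      exact mul_rpow_neg_le_rpow_sub_rpow n.cast_nonneg hc0 hc1.le
  simpa [zero_rpow h1c.ne'] using this

theorem sum_Ioc_rpow_neg_one_sub_le {s : ℝ} (hs : 0 < s) {a : ℕ} (ha : 0 < a) (b : ℕ) :
    ∑ n ∈ Ioc a b, (n : ℝ) ^ (-1 - s) ≤ (a : ℝ) ^ (-s) / s := by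
  rcases le_or_gt a b with hab | hba
  · have := sum_Ioc_le_sub_of_le_sub (f := fun n : ℕ => (n : ℝ) ^ (-1 - s))
      (F := fun n : ℕ => -(n : ℝ) ^ (-s) / s) hab fun n han _ => by
        rw [neg_div, neg_div, sub_neg_eq_add, neg_add_eq_sub, div_sub_div_same, le_div_iff₀ hs,
          mul_comm]
        push_cast
        exact mul_rpow_neg_one_sub_le_rpow_neg_sub_rpow_neg (by exact_mod_cast ha.trans_le han) hs
    have hb : 0 ≤ (b : ℝ) ^ (-s) / s := by positivity
    simp only [neg_div] at this
    linarith
  · rw [Ioc_eq_empty (by omega), sum_empty]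
    positivity

end Real

theorem sum_natAbs_le_two_mul_sum {s : Finset ℤ} {t : Finset ℕ} {g : ℕ → ℝ}
    (hst : ∀ y ∈ s, y.natAbs ∈ t) (hg : ∀ n ∈ t, 0 ≤ g n) :
    ∑ y ∈ s, g y.natAbs ≤ 2 * ∑ n ∈ t, g n := by
  rw [← sum_fiberwise_of_maps_to hst, mul_sum]
  refine sum_le_sum fun n hn => ?_
  have hfiber : {y ∈ s | y.natAbs = n} ⊆ {(n : ℤ), -(n : ℤ)} := fun y hy => by
    rw [mem_insert, mem_singleton, ← (mem_filter.1 hy).2]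
    exact Int.natAbs_eq y
  rw [sum_congr rfl fun y hy => by rw [(mem_filter.1 hy).2], sum_const, nsmul_eq_mul]
  gcongr
  · exact hg n hn
  · exact_mod_cast (card_le_card hfiber).trans card_le_two

theorem sum_inv_natAbs_le {s : Finset ℤ} {N : ℕ} (hs : ∀ x ∈ s, x.natAbs ∈ Icc 1 N) :
    ∑ x ∈ s, (x.natAbs : ℝ)⁻¹ ≤ 2 * (1 + log N) := by
  refine (sum_natAbs_le_two_mul_sum (g := fun n : ℕ => (n : ℝ)⁻¹) hs
    fun n _ => by positivity).trans ?_
  gcongr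
  simpa [harmonic_eq_sum_Icc] using harmonic_le_one_add_log N

noncomputable def pairWeight (γ u v : ℝ) : ℝ := (max u v / min u v) ^ γ / max u v ^ 2

section pairWeight

theorem pairWeight_comm (γ u v : ℝ) : pairWeight γ u v = pairWeight γ v u := by
  rw [pairWeight, pairWeight, max_comm, min_comm]

variable {γ u v : ℝ}

theorem pairWeight_nonneg (hu : 0 ≤ u) (hv : 0 ≤ v) : 0 ≤ pairWeight γ u v := by
  unfold pairWeight
  have : 0 ≤ min u v := le_min hu hv
  positivity

theorem pairWeight_of_le (hv : 0 < v) (hvu : v ≤ u) :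
    pairWeight γ u v = u ^ (γ - 2) * v ^ (-γ) := by
  have hu : 0 < u := hv.trans_le hvu
  rw [pairWeight, max_eq_left hvu, min_eq_right hvu, div_rpow hu.le hv.le, rpow_sub hu, rpow_two,
    rpow_neg hv.le]
  field_simp

theorem sum_Icc_pairWeight_le (hγ0 : 0 ≤ γ) (hγ1 : γ < 1) {u : ℕ} (hu : 0 < u) (N : ℕ) :
    ∑ n ∈ Icc 1 N, pairWeight γ u n ≤ 2 / ((1 - γ) * u) := by
  have hu' : (0 : ℝ) < u := by exact_mod_cast hu
  have h1γ : 0 < 1 - γ := by linarith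
  have hbulk : ∑ n ∈ Ioc 0 u, pairWeight γ u n ≤ 1 / ((1 - γ) * u) := by
    calc ∑ n ∈ Ioc 0 u, pairWeight γ u n = (u : ℝ) ^ (γ - 2) * ∑ n ∈ Ioc 0 u, (n : ℝ) ^ (-γ) := by
          rw [mul_sum]
          refine sum_congr rfl fun n hn => pairWeight_of_le ?_ ?_
          · exact_mod_cast (mem_Ioc.1 hn).1
          · exact_mod_cast (mem_Ioc.1 hn).2
      _ ≤ (u : ℝ) ^ (γ - 2) * ((u : ℝ) ^ (1 - γ) / (1 - γ)) := by
          gcongr; exact sum_Ioc_rpow_neg_le hγ0 hγ1 u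
      _ = 1 / ((1 - γ) * u) := by
          rw [mul_div_assoc', ← rpow_add hu', show γ - 2 + (1 - γ) = -1 by ring, rpow_neg_one]
          field_simp
  have htail : ∀ M, ∑ n ∈ Ioc u M, pairWeight γ u n ≤ 1 / ((1 - γ) * u) := fun M => by
    calc ∑ n ∈ Ioc u M, pairWeight γ u n
          = (u : ℝ) ^ (-γ) * ∑ n ∈ Ioc u M, (n : ℝ) ^ (-1 - (1 - γ)) := by
          rw [mul_sum]
          refine sum_congr rfl fun n hn => ?_
          rw [pairWeight_comm, pairWeight_of_le hu' (by exact_mod_cast (mem_Ioc.1 hn).1.le),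
            show -1 - (1 - γ) = γ - 2 by ring, mul_comm]
      _ ≤ (u : ℝ) ^ (-γ) * ((u : ℝ) ^ (-(1 - γ)) / (1 - γ)) := by
          gcongr; exact sum_Ioc_rpow_neg_one_sub_le h1γ hu M
      _ = 1 / ((1 - γ) * u) := by
          rw [mul_div_assoc', ← rpow_add hu', show -γ + -(1 - γ) = -1 by ring, rpow_neg_one]
          field_simp
  calc ∑ n ∈ Icc 1 N, pairWeight γ u n ≤ ∑ n ∈ Ioc 0 (max u N), pairWeight γ u n := by
        refine sum_le_sum_of_subset_of_nonneg (fun n hn => ?_) fun n _ _ =>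
          pairWeight_nonneg hu'.le n.cast_nonneg
        simp only [mem_Icc, mem_Ioc] at hn ⊢
        omega
    _ = ∑ n ∈ Ioc 0 u, pairWeight γ u n + ∑ n ∈ Ioc u (max u N), pairWeight γ u n :=
        (sum_Ioc_consecutive _ (Nat.zero_le u) (le_max_left u N)).symm
    _ ≤ 1 / ((1 - γ) * u) + 1 / ((1 - γ) * u) := add_le_add hbulk (htail _)
    _ = 2 / ((1 - γ) * u) := by ring

end pairWeight

namespace Real

theorem log_div_div_le_rpow_div {m M d ε : ℝ} (hm : 0 < m) (hmM : m ≤ M) (hd : M - m ≤ d)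
    (hd0 : 0 < d) (hε : 0 < ε) (hε1 : ε ≤ 1) :
    log (M / m) / d ≤ 2 * (M / m) ^ ε / (ε * M) := by
  have hM : 0 < M := hm.trans_le hmM
  have hr : 1 ≤ M / m := (one_le_div hm).2 hmM
  have hrε : 1 ≤ (M / m) ^ ε / ε :=
    (one_le_div hε).2 (hε1.trans (one_le_rpow hr hε.le))
  by_cases hnear : M ≤ 2 * m
  · have hlog : log (M / m) ≤ d / m :=
      calc log (M / m) ≤ M / m - 1 := log_le_sub_one_of_pos (by positivity)
        _ = (M - m) / m := by field_simp
        _ ≤ d / m := by gcongr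
    calc log (M / m) / d ≤ 1 / m := by
          rw [div_le_div_iff₀ hd0 hm, one_mul]; exact (le_div_iff₀ hm).1 hlog
      _ ≤ 2 / M := by rw [div_le_div_iff₀ hm hM]; linarith
      _ ≤ (M / m) ^ ε / ε * (2 / M) := le_mul_of_one_le_left (by positivity) hrε
      _ = 2 * (M / m) ^ ε / (ε * M) := by ring
  · calc log (M / m) / d ≤ ((M / m) ^ ε / ε) / (M / 2) := by
          gcongr
          · exact log_le_rpow_div (by positivity) hε
          · linarith
      _ = 2 * (M / m) ^ ε / (ε * M) := by ring

theorem log_sq_mul_sq_div_sq_le_of_le {α ε m M d : ℝ} (hα : 0 ≤ α) (hε : 0 < ε) (hε1 : ε ≤ 1)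
    (hm : 0 < m) (hmM : m ≤ M) (hd : M - m ≤ d) (hd0 : 0 < d) :
    log (M / m) ^ 2 * ((M / m) ^ α + (m / M) ^ α) ^ 2 / d ^ 2
      ≤ 16 / ε ^ 2 * pairWeight (2 * α + 2 * ε) M m := by
  have hM : 0 < M := hm.trans_le hmM
  have hr : 1 ≤ M / m := (one_le_div hm).2 hmM
  have hsum : (M / m) ^ α + (m / M) ^ α ≤ 2 * (M / m) ^ α := by
    have : (m / M) ^ α ≤ (M / m) ^ α :=
      (rpow_le_one (by positivity) ((div_le_one hM).2 hmM) hα).trans (one_le_rpow hr hα)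
    linarith
  have hlog := log_div_div_le_rpow_div hm hmM hd hd0 hε hε1
  rw [pairWeight, max_eq_left hmM, min_eq_right hmM]
  calc log (M / m) ^ 2 * ((M / m) ^ α + (m / M) ^ α) ^ 2 / d ^ 2
      = (log (M / m) / d) ^ 2 * ((M / m) ^ α + (m / M) ^ α) ^ 2 := by ring
    _ ≤ (2 * (M / m) ^ ε / (ε * M)) ^ 2 * (2 * (M / m) ^ α) ^ 2 := by
        gcongr
        exact div_nonneg (log_nonneg hr) hd0.le
    _ = 16 / ε ^ 2 * (((M / m) ^ ε) ^ 2 * ((M / m) ^ α) ^ 2 / M ^ 2) := by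
        field_simp; ring
    _ = 16 / ε ^ 2 * ((M / m) ^ (2 * α + 2 * ε) / M ^ 2) := by
        rw [← rpow_mul_natCast (by positivity), ← rpow_mul_natCast (by positivity),
          ← rpow_add (by positivity)]
        congr 3; push_cast; ring

theorem log_sq_mul_sq_div_sq_le_pairWeight {α ε u v d : ℝ} (hα : 0 ≤ α) (hε : 0 < ε)
    (hε1 : ε ≤ 1) (hu : 0 < u) (hv : 0 < v) (hd : |u - v| ≤ d) (hd0 : 0 < d) :
    log (u / v) ^ 2 * ((u / v) ^ α + (v / u) ^ α) ^ 2 / d ^ 2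
      ≤ 16 / ε ^ 2 * pairWeight (2 * α + 2 * ε) u v := by
  rcases le_total v u with hvu | huv
  · exact log_sq_mul_sq_div_sq_le_of_le hα hε hε1 hv hvu ((le_abs_self _).trans hd) hd0
  · rw [pairWeight_comm, add_comm, ← neg_sq, ← log_inv, inv_div]
    exact log_sq_mul_sq_div_sq_le_of_le hα hε hε1 hu huv
      ((le_abs_self _).trans ((abs_sub_comm v u).trans_le hd)) hd0

end Real

theorem sq_log_abs_sub_mul_sq_le {α ε C k : ℝ} (hα : 0 ≤ α) (hε : 0 < ε) (hε1 : ε ≤ 1)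
    {x y : ℤ} (hx : x ≠ 0) (hy : y ≠ 0) (hxy : x ≠ y)
    (hk : |k| ≤ C * (((|x| : ℝ) / (|y| : ℝ)) ^ α + ((|y| : ℝ) / (|x| : ℝ)) ^ α)
      / |(x : ℝ) - (y : ℝ)|) :
    (log |(x : ℝ)| - log |(y : ℝ)|) ^ 2 * k ^ 2
      ≤ C ^ 2 * (16 / ε ^ 2) * pairWeight (2 * α + 2 * ε) x.natAbs y.natAbs := by
  have hu : 0 < |(x : ℝ)| := abs_pos.2 (Int.cast_ne_zero.2 hx)
  have hv : 0 < |(y : ℝ)| := abs_pos.2 (Int.cast_ne_zero.2 hy)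
  have hd : 0 < |(x : ℝ) - y| := abs_pos.2 (sub_ne_zero.2 (Int.cast_injective.ne hxy))
  have hk2 : k ^ 2 ≤ (C * (((|x| : ℝ) / (|y| : ℝ)) ^ α + ((|y| : ℝ) / (|x| : ℝ)) ^ α)
      / |(x : ℝ) - (y : ℝ)|) ^ 2 := by
    rw [← sq_abs k]; exact pow_le_pow_left₀ (abs_nonneg k) hk 2
  simp only [Nat.cast_natAbs, Int.cast_abs]
  rw [← log_div hu.ne' hv.ne']
  calc log (|(x : ℝ)| / |(y : ℝ)|) ^ 2 * k ^ 2
      ≤ log (|(x : ℝ)| / |(y : ℝ)|) ^ 2 * (C * (((|x| : ℝ) / (|y| : ℝ)) ^ α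
          + ((|y| : ℝ) / (|x| : ℝ)) ^ α) / |(x : ℝ) - (y : ℝ)|) ^ 2 := by gcongr
    _ = C ^ 2 * (log (|(x : ℝ)| / |(y : ℝ)|) ^ 2 * (((|x| : ℝ) / (|y| : ℝ)) ^ α
          + ((|y| : ℝ) / (|x| : ℝ)) ^ α) ^ 2 / |(x : ℝ) - (y : ℝ)| ^ 2) := by ring
    _ ≤ _ := by
        rw [mul_assoc]
        gcongr
        exact log_sq_mul_sq_div_sq_le_pairWeight hα hε hε1 hu hv
          (abs_abs_sub_abs_le_abs_sub _ _) hd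

theorem sum_sq_log_abs_sub_mul_sq_le {α ε C : ℝ} (hα : 0 ≤ α) (hε : 0 < ε) (hε1 : ε ≤ 1)
    (hγ : 2 * α + 2 * ε < 1) {k : ℤ → ℝ} {x : ℤ} (hx : x ≠ 0) {s : Finset ℤ} {N : ℕ}
    (hs : ∀ y ∈ s, y ≠ x ∧ y.natAbs ∈ Icc 1 N)
    (hk : ∀ y ∈ s, |k y| ≤ C * (((|x| : ℝ) / (|y| : ℝ)) ^ α + ((|y| : ℝ) / (|x| : ℝ)) ^ α)
      / |(x : ℝ) - (y : ℝ)|) :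
    ∑ y ∈ s, (log |(x : ℝ)| - log |(y : ℝ)|) ^ 2 * k y ^ 2
      ≤ 64 * C ^ 2 / (ε ^ 2 * (1 - (2 * α + 2 * ε))) * (x.natAbs : ℝ)⁻¹ := by
  set γ := 2 * α + 2 * ε
  have hx' : 0 < x.natAbs := Int.natAbs_pos.2 hx
  calc ∑ y ∈ s, (log |(x : ℝ)| - log |(y : ℝ)|) ^ 2 * k y ^ 2
      ≤ ∑ y ∈ s, C ^ 2 * (16 / ε ^ 2) * pairWeight γ x.natAbs y.natAbs := by
        refine sum_le_sum fun y hy =>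
          sq_log_abs_sub_mul_sq_le hα hε hε1 hx ?_ (hs y hy).1.symm (hk y hy)
        have := (mem_Icc.1 (hs y hy).2).1
        omega
    _ = C ^ 2 * (16 / ε ^ 2) * ∑ y ∈ s, pairWeight γ x.natAbs y.natAbs := by
        rw [mul_sum]
    _ ≤ C ^ 2 * (16 / ε ^ 2) * (2 * ∑ n ∈ Icc 1 N, pairWeight γ x.natAbs n) := by
        gcongr
        exact sum_natAbs_le_two_mul_sum (g := fun n : ℕ => pairWeight γ x.natAbs n)
          (fun y hy => (hs y hy).2)
          fun n _ => pairWeight_nonneg (Nat.cast_nonneg _) (Nat.cast_nonneg _)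
    _ ≤ C ^ 2 * (16 / ε ^ 2) * (2 * (2 / ((1 - γ) * x.natAbs))) := by
        gcongr
        exact sum_Icc_pairWeight_le (by positivity) hγ hx' N
    _ = 64 * C ^ 2 / (ε ^ 2 * (1 - γ)) * (x.natAbs : ℝ)⁻¹ := by
        field_simp; ring

theorem div_sq_le_of_le_mul_one_add {S A a L : ℝ} (hA : 0 ≤ A) (ha : 0 < a) (haL : a ≤ L)
    (hS : S ≤ A * (1 + L)) : S / L ^ 2 ≤ A * (1 + 1 / a) / L := by
  have hL : 0 < L := ha.trans_le haL
  calc S / L ^ 2 ≤ A * (1 + L) / L ^ 2 := by gcongr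
    _ = A * (1 + 1 / L) / L := by field_simp; ring
    _ ≤ A * (1 + 1 / a) / L := by gcongr

theorem natAbs_mem_Icc_of_mem_filter {R : ℤ} (hR : 1 ≤ R) {T : ℕ} {x : ℤ}
    (hx : x ∈ (Icc (-(T : ℤ)) T).filter (fun x => R ≤ |x|)) : x.natAbs ∈ Icc 1 T := by
  simp only [mem_filter, mem_Icc, Int.abs_eq_natAbs] at hx ⊢
  omega

theorem stmt16 (α : ℝ) (hα : α ∈ Set.Ioo (0:ℝ) (1/2)) (C : ℝ) (hC : 0 < C)
    (R : ℤ) (hR : 1 ≤ R) (K : ℤ → ℤ → ℝ)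
    (hK : ∀ x y : ℤ, R ≤ |x| → R ≤ |y| → x ≠ y →
      |K x y| ≤ C * (((|x| : ℝ) / (|y| : ℝ)) ^ α + ((|y| : ℝ) / (|x| : ℝ)) ^ α) / |(x : ℝ) - (y : ℝ)|) :
    ∃ C' : ℝ, 0 < C' ∧ ∀ T : ℤ, R < T →
      (∑ x ∈ (Finset.Icc (-T) T).filter (fun x => R ≤ |x|),
        ∑ y ∈ ((Finset.Icc (-T) T).filter (fun y => R ≤ |y|)).erase x,
          ((Real.log |(x:ℝ)| - Real.log |(y:ℝ)|) / Real.log (T:ℝ))^2 * (K x y)^2)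
        ≤ C' / Real.log (T : ℝ) := by
  obtain ⟨hα0, hα1⟩ := hα
  obtain ⟨ε, hε, hε1, hγ⟩ : ∃ ε : ℝ, 0 < ε ∧ ε ≤ 1 ∧ 2 * α + 2 * ε < 1 :=
    ⟨(1 - 2 * α) / 4, by linarith, by linarith, by linarith⟩
  set B := 64 * C ^ 2 / (ε ^ 2 * (1 - (2 * α + 2 * ε)))
  have hB : 0 < B := div_pos (by positivity) (mul_pos (by positivity) (by linarith))
  have hlog2 : 0 < log 2 := log_pos one_lt_two
  refine ⟨2 * B * (1 + 1 / log 2), by positivity, fun T hT => ?_⟩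
  lift T to ℕ using (by omega)
  simp only [Int.cast_natCast]
  set X := (Icc (-(T : ℤ)) T).filter (fun x => R ≤ |x|)
  have hX : ∀ x ∈ X, x.natAbs ∈ Icc 1 T := fun x hx => natAbs_mem_Icc_of_mem_filter hR hx
  have hlogT : log 2 ≤ log T := log_le_log two_pos (by exact_mod_cast (by omega : 2 ≤ T))
  have hrow : ∀ x ∈ X, ∑ y ∈ X.erase x, (log |(x : ℝ)| - log |(y : ℝ)|) ^ 2 * K x y ^ 2
      ≤ B * (x.natAbs : ℝ)⁻¹ := fun x hx =>
    sum_sq_log_abs_sub_mul_sq_le hα0.le hε hε1 hγ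
      (Int.natAbs_pos.1 (mem_Icc.1 (hX x hx)).1)
      (fun y hy => ⟨ne_of_mem_erase hy, hX y (mem_of_mem_erase hy)⟩)
      fun y hy => hK x y (mem_filter.1 hx).2 (mem_filter.1 (mem_of_mem_erase hy)).2
        (ne_of_mem_erase hy).symm
  have htotal : ∑ x ∈ X, ∑ y ∈ X.erase x, (log |(x : ℝ)| - log |(y : ℝ)|) ^ 2 * K x y ^ 2
      ≤ 2 * B * (1 + log T) :=
    calc _ ≤ B * ∑ x ∈ X, (x.natAbs : ℝ)⁻¹ := (sum_le_sum hrow).trans_eq (mul_sum _ _ _).symm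
      _ ≤ B * (2 * (1 + log T)) := by gcongr; exact sum_inv_natAbs_le hX
      _ = 2 * B * (1 + log T) := by ring
  calc ∑ x ∈ X, ∑ y ∈ X.erase x, ((log |(x : ℝ)| - log |(y : ℝ)|) / log T) ^ 2 * K x y ^ 2
      = (∑ x ∈ X, ∑ y ∈ X.erase x, (log |(x : ℝ)| - log |(y : ℝ)|) ^ 2 * K x y ^ 2)
        / log T ^ 2 := by
        simp only [sum_div, div_pow, div_mul_eq_mul_div]
    _ ≤ 2 * B * (1 + 1 / log 2) / log T :=
        div_sq_le_of_le_mul_one_add (by positivity) hlog2 hlogT htotal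
end
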